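/- Evaluation formula (3.19) for the inverse Dunkl–Cherednik operator: for every Laurent polynomial f ∈ F[U,U^{−1}] and every integer N ≥ 1, (𝒴′f)(−q^{2N}) = −t₁^{−1} q^{2N} f(−q^{2N}) + t̄₁ ∑_{p=0}^{N−1} q^{2p} f(−q^{2(2p−N)}) − t̄₂ ∑_{p=0}^{N−1} q^{2p+1} f(−q^{2(2p−N+1)}), where g(c) denotes the evaluation of g ∈ F[U,U^{−1}] at U = c. -/

import Mathlib

noncomputable section

open LaurentPolynomial

/-- The field `F = ℚ(q, t₁, t₂)` of rational functions in three indeterminates. -/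
abbrev F : Type := FractionRing (MvPolynomial (Fin 3) ℚ)

def q : F := algebraMap (MvPolynomial (Fin 3) ℚ) F (MvPolynomial.X 0)
def t1 : F := algebraMap (MvPolynomial (Fin 3) ℚ) F (MvPolynomial.X 1)
def t2 : F := algebraMap (MvPolynomial (Fin 3) ℚ) F (MvPolynomial.X 2)

/-- `a_k = (t̄₁ − t̄₂ q^{2k−1})/(1 − q^{4k−2})`. -/
def aop (k : ℤ) : F :=
  ((t1 - t1⁻¹) - (t2 - t2⁻¹) * q ^ (2 * k - 1)) / (1 - q ^ (4 * k - 2))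

/-- Evaluation of a Laurent polynomial `f ∈ F[U,U⁻¹]` at a point `c ∈ F`
(sending the monomial `U^k` to `c^k`). -/
def evalL (c : F) (f : LaurentPolynomial F) : F := Finsupp.sum f.coeff fun k r => r * c ^ k

/-!
Both sides are `F`-linear in `f`, so it suffices to take `f = U^k`. Put `c = -q^{2N}` and
`y = q^{2k+1}`. The `p`-th summands on the right are `c^{-k} y^{2p}` and `c^{-k} y · y^{2p}`, so
both sums are multiples of the geometric sum `G = ∑_{p<N} y^{2p}`, which satisfies
`G (y² - 1) = y^{2N} - 1 = -c · c^{2k} - 1`. Together with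
`a_{-k} (y² - 1) = t̄₁ y² - t̄₂ y` this makes the monomial identity a linear combination of
known relations; `y² ≠ 1` because `q` is transcendental.
-/

section

variable {K : Type*} [Field K] {x : K}

lemma zpow_mul_neg_zpow_two_mul_sub (hx : x ≠ 0) (a b k : ℤ) :
    x ^ a * (-(x ^ (2 * a - b))) ^ k = (-(x ^ b)) ^ (-k) * x ^ (a * (2 * k + 1)) := by
  have hsplit : -(x ^ (2 * a - b)) = (-(x ^ b))⁻¹ * x ^ (2 * a) := by
    rw [inv_neg, zpow_sub₀ hx, div_eq_inv_mul, neg_mul]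
  rw [hsplit, mul_zpow, inv_zpow', mul_left_comm, ← zpow_mul, ← zpow_add₀ hx]
  congr 2
  ring

lemma sum_range_zpow_mul_neg_zpow (hx : x ≠ 0) (N : ℕ) (k m : ℤ) :
    ∑ p ∈ Finset.range N, x ^ (2 * (p : ℤ) + m) * (-(x ^ (2 * (2 * (p : ℤ) - N + m)))) ^ k =
      (-(x ^ (2 * (N : ℤ)))) ^ (-k) * (x ^ (2 * k + 1)) ^ m *
        ∑ p ∈ Finset.range N, ((x ^ (2 * k + 1)) ^ 2) ^ p := by
  rw [Finset.mul_sum]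
  refine Finset.sum_congr rfl fun p _ => ?_
  rw [show 2 * (2 * (p : ℤ) - N + m) = 2 * (2 * p + m) - 2 * N by ring,
    zpow_mul_neg_zpow_two_mul_sub hx, mul_assoc, ← zpow_mul, ← zpow_natCast, ← zpow_natCast,
    ← zpow_mul, ← zpow_mul, ← zpow_add₀ hx]
  congr 2
  push_cast
  ring

end

lemma q_ne_zero : q ≠ 0 :=
  (map_ne_zero_iff _ (IsFractionRing.injective (MvPolynomial (Fin 3) ℚ) F)).mpr
    (MvPolynomial.X_ne_zero 0)

lemma q_zpow_ne_one {n : ℤ} (hn : n ≠ 0) : q ^ n ≠ 1 := by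
  have hpow : ∀ m : ℕ, m ≠ 0 → q ^ m ≠ 1 := by
    intro m hm h
    rw [q, ← map_pow, ← map_one (algebraMap (MvPolynomial (Fin 3) ℚ) F),
      (IsFractionRing.injective _ F).eq_iff, MvPolynomial.X_pow_eq_monomial, ← MvPolynomial.C_1,
      ← MvPolynomial.monomial_zero',
      (MvPolynomial.monomial_left_injective one_ne_zero).eq_iff, Finsupp.single_eq_zero] at h
    exact hm h
  rcases Int.natAbs_eq n with h | h <;> rw [h]
  · exact_mod_cast hpow _ (by omega)
  · rw [zpow_neg, inv_ne_one, zpow_natCast]; exact hpow _ (by omega)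

lemma aop_neg_mul_sq_sub_one (k : ℤ) :
    aop (-k) * ((q ^ (2 * k + 1)) ^ 2 - 1) =
      (t1 - t1⁻¹) * (q ^ (2 * k + 1)) ^ 2 - (t2 - t2⁻¹) * q ^ (2 * k + 1) := by
  have hy2 : (q ^ (2 * k + 1)) ^ 2 ≠ 1 := by
    rw [← zpow_natCast, ← zpow_mul]; exact q_zpow_ne_one (by omega)
  rw [aop, show 2 * -k - 1 = -(2 * k + 1) by ring, show 4 * -k - 2 = -((2 * k + 1) * 2) by ring,
    zpow_neg, zpow_neg, zpow_mul, zpow_ofNat]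
  have hy : q ^ (2 * k + 1) ≠ 0 := zpow_ne_zero _ q_ne_zero
  generalize q ^ (2 * k + 1) = y at hy hy2 ⊢
  have hy2' : 1 - (y ^ 2)⁻¹ ≠ 0 := sub_ne_zero.mpr (inv_ne_one.mpr hy2).symm
  rw [div_mul_eq_mul_div, div_eq_iff hy2']
  field_simp

lemma evaluation_formula_monomial (N : ℕ) (k : ℤ) :
    t1 * (-(q ^ (2 * (N : ℤ)))) ^ (k + 1)
      - aop (-k) * ((-(q ^ (2 * (N : ℤ)))) ^ (k + 1) + (-(q ^ (2 * (N : ℤ)))) ^ (-k))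
      + (t1 - t1⁻¹) * (-(q ^ (2 * (N : ℤ)))) ^ (-k)
    = -t1⁻¹ * q ^ (2 * (N : ℤ)) * (-(q ^ (2 * (N : ℤ)))) ^ k
      + (t1 - t1⁻¹) * ∑ p ∈ Finset.range N,
          q ^ (2 * (p : ℤ)) * (-(q ^ (2 * (2 * (p : ℤ) - (N : ℤ))))) ^ k
      - (t2 - t2⁻¹) * ∑ p ∈ Finset.range N,
          q ^ (2 * (p : ℤ) + 1) * (-(q ^ (2 * (2 * (p : ℤ) - (N : ℤ) + 1)))) ^ k := by
  have hsum₀ := sum_range_zpow_mul_neg_zpow q_ne_zero N k 0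
  have hsum₁ := sum_range_zpow_mul_neg_zpow q_ne_zero N k 1
  simp only [add_zero, zpow_zero, mul_one, zpow_one] at hsum₀ hsum₁
  set c := -(q ^ (2 * (N : ℤ))) with hc_def
  have hc : c ≠ 0 := neg_ne_zero.mpr (zpow_ne_zero _ q_ne_zero)
  have hu : c ^ k * (c ^ k)⁻¹ = 1 := mul_inv_cancel₀ (zpow_ne_zero _ hc)
  have hc2 : (c ^ k) ^ 2 = q ^ (4 * N * k) := by
    rw [← zpow_natCast, ← zpow_mul, hc_def, Even.neg_zpow ⟨k, by push_cast; ring⟩,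
      ← zpow_mul]
    congr 1
    push_cast
    ring
  have hG : (∑ p ∈ Finset.range N, ((q ^ (2 * k + 1)) ^ 2) ^ p) * ((q ^ (2 * k + 1)) ^ 2 - 1) =
      -c * (c ^ k) ^ 2 - 1 := by
    rw [geom_sum_mul, hc2, hc_def, neg_neg, ← zpow_add₀ q_ne_zero]
    simp only [← zpow_natCast, ← zpow_mul]
    congr 3
    push_cast
    ring
  set y := q ^ (2 * k + 1)
  set G := ∑ p ∈ Finset.range N, (y ^ 2) ^ p
  rw [hsum₀, hsum₁, zpow_add_one₀ hc, zpow_neg]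
  linear_combination (c ^ k)⁻¹ * G * aop_neg_mul_sq_sub_one k
    + (t1 - t1⁻¹ - aop (-k)) * (c ^ k)⁻¹ * hG
    + (aop (-k) - (t1 - t1⁻¹)) * c * c ^ k * hu - t1⁻¹ * c ^ k * hc_def

def evalLinear (c : F) : LaurentPolynomial F →ₗ[F] F :=
  Finsupp.linearCombination F (c ^ ·) ∘ₗ (AddMonoidAlgebra.coeffLinearEquiv F).toLinearMap

lemma evalLinear_apply (c : F) (f : LaurentPolynomial F) : evalLinear c f = evalL c f := rfl

lemma evalLinear_T (c : F) (k : ℤ) : evalLinear c (T k) = c ^ k := by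
  simp only [evalLinear, T, LinearMap.coe_comp, Function.comp_apply, LinearEquiv.coe_coe,
    AddMonoidAlgebra.coeffLinearEquiv_apply, AddMonoidAlgebra.coeff_single,
    Finsupp.linearCombination_single, one_smul]

theorem evaluation_formula_inverse_Dunkl_Cherednik_general
    (Y' : Module.End F (LaurentPolynomial F))
    (hY' : ∀ k : ℤ, Y' (T k) =
      t1 • T (k + 1) - aop (-k) • (T (k + 1) + T (-k)) + (t1 - t1⁻¹) • T (-k))
    (f : LaurentPolynomial F) (N : ℕ) :
    evalL (-(q ^ (2 * (N : ℤ)))) (Y' f) =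
      -t1⁻¹ * q ^ (2 * (N : ℤ)) * evalL (-(q ^ (2 * (N : ℤ)))) f
      + (t1 - t1⁻¹) * ∑ p ∈ Finset.range N,
          q ^ (2 * (p : ℤ)) * evalL (-(q ^ (2 * (2 * (p : ℤ) - (N : ℤ))))) f
      - (t2 - t2⁻¹) * ∑ p ∈ Finset.range N,
          q ^ (2 * (p : ℤ) + 1) * evalL (-(q ^ (2 * (2 * (p : ℤ) - (N : ℤ) + 1)))) f := by
  have hfunctional : evalLinear (-(q ^ (2 * (N : ℤ)))) ∘ₗ Y' =
      (-t1⁻¹ * q ^ (2 * (N : ℤ))) • evalLinear (-(q ^ (2 * (N : ℤ))))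
      + (t1 - t1⁻¹) • ∑ p ∈ Finset.range N,
          q ^ (2 * (p : ℤ)) • evalLinear (-(q ^ (2 * (2 * (p : ℤ) - (N : ℤ)))))
      - (t2 - t2⁻¹) • ∑ p ∈ Finset.range N,
          q ^ (2 * (p : ℤ) + 1) •
            evalLinear (-(q ^ (2 * (2 * (p : ℤ) - (N : ℤ) + 1)))) := by
    refine (AddMonoidAlgebra.basis ℤ F).ext fun k => ?_
    simp only [LinearMap.comp_apply, AddMonoidAlgebra.basis_apply, LinearMap.add_apply,
      LinearMap.sub_apply, LinearMap.smul_apply, LinearMap.sum_apply]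
    rw [← T, hY']
    simp only [map_add, map_sub, map_smul, evalLinear_T, smul_eq_mul]
    linear_combination evaluation_formula_monomial N k
  simpa [evalLinear_apply] using LinearMap.congr_fun hfunctional f

theorem evaluation_formula_inverse_Dunkl_Cherednik
    (Y' : Module.End F (LaurentPolynomial F))
    (hY' : ∀ k : ℤ, Y' (T k) =
      t1 • T (k + 1) - aop (-k) • (T (k + 1) + T (-k)) + (t1 - t1⁻¹) • T (-k))
    (f : LaurentPolynomial F) (N : ℕ) (hN : 1 ≤ N) :
    evalL (-(q ^ (2 * (N : ℤ)))) (Y' f) =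
      -t1⁻¹ * q ^ (2 * (N : ℤ)) * evalL (-(q ^ (2 * (N : ℤ)))) f
      + (t1 - t1⁻¹) * ∑ p ∈ Finset.range N,
          q ^ (2 * (p : ℤ)) * evalL (-(q ^ (2 * (2 * (p : ℤ) - (N : ℤ))))) f
      - (t2 - t2⁻¹) * ∑ p ∈ Finset.range N,
          q ^ (2 * (p : ℤ) + 1) * evalL (-(q ^ (2 * (2 * (p : ℤ) - (N : ℤ) + 1)))) f :=
  evaluation_formula_inverse_Dunkl_Cherednik_general Y' hY' f N

end
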